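/- On Ω̃_ℤ, the σ-algebra Σ generated by the sets cert_ℤ(Γ_n), over all n ≥ 1 and all sets Γ_n of n-orders with cert_ℤ(Γ_n) nonempty, equals the σ-algebra R generated by the sets convex(C_n) over all finite orders C_n. -/

import Mathlib

/-- A strict partial order on `Fin n` (a representative of an `n`-order). -/
def FinSPO (n : ℕ) : Type :=
  {r : Fin n → Fin n → Prop // Transitive r ∧ ∀ x : Fin n, ¬ r x x}

/-- Order-isomorphism of representatives. -/
def IsoFin {n : ℕ} (p q : FinSPO n) : Prop :=
  ∃ g : Fin n ≃ Fin n, ∀ a b : Fin n, p.1 a b ↔ q.1 (g a) (g b)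

/-- An `n`-order: an order-isomorphism class of `n`-element strict partial orders. -/
def NOrder (n : ℕ) : Type := Quot (@IsoFin n)

/-- The `n`-order represented by `p`. -/
def toNOrder {n : ℕ} (p : FinSPO n) : NOrder n := Quot.mk _ p

/-- `S` is a (finite) convex subset of the causet `(α, r)`. -/
def IsConvexIn {α : Type*} (r : α → α → Prop) (S : Set α) : Prop :=
  S.Finite ∧ ∀ x ∈ S, ∀ y ∈ S, ∀ z : α, r x z → r z y → z ∈ S

/-- The representative `p` is realised by a convex subset of the causet `(α, r)`. -/
def RepConvex {α : Type*} (r : α → α → Prop) {n : ℕ} (p : FinSPO n) : Prop :=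
  ∃ g : Fin n → α, Function.Injective g ∧ IsConvexIn r (Set.range g) ∧
    ∀ a b : Fin n, p.1 a b ↔ r (g a) (g b)

/-- The set of `n`-convex-suborders of the causet `(α, r)`. -/
def convexSubords {α : Type*} (r : α → α → Prop) (n : ℕ) : Set (NOrder n) :=
  {o | ∃ p : FinSPO n, o = toNOrder p ∧ RepConvex r p}

/-- A (finite or countably infinite) causal set: a countable strict partial order
which is locally finite. -/
structure Causet where
  carrier : Type
  rel : carrier → carrier → Prop
  countable : Countable carrier
  trans : Transitive rel
  irrefl : ∀ x : carrier, ¬ rel x x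
  locFin : ∀ x y : carrier, {z : carrier | rel x z ∧ rel z y}.Finite

/-- `C` is a certificate of `Γ`: the set of `n`-convex-suborders of `C` equals `Γ`. -/
def IsCert (C : Causet) {n : ℕ} (Γ : Set (NOrder n)) : Prop :=
  convexSubords C.rel n = Γ

/-- `Γ` is a node of convex-covtree: it has at least one certificate. -/
def IsNodeCC {n : ℕ} (Γ : Set (NOrder n)) : Prop := ∃ C : Causet, IsCert C Γ

/-- `O⁻(Γ)`: the set of `n`-orders represented by convex subsets of representatives
of members of `Γ`. -/
def Ominus {n : ℕ} (Γ : Set (NOrder (n + 1))) : Set (NOrder n) :=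
  {o | ∃ q : FinSPO n, o = toNOrder q ∧
    ∃ p : FinSPO (n + 1), toNOrder p ∈ Γ ∧ RepConvex p.1 q}

/-- A labeled causet with ground set ℤ: a strict partial order `r` on ℤ with
`r x y → x < y`. -/
def OmegaZ : Type :=
  {r : ℤ → ℤ → Prop // Transitive r ∧ ∀ x y : ℤ, r x y → x < y}

/-- `cert_ℤ(Γ)`: the labeled causets on ℤ whose set of `n`-convex-suborders is `Γ`. -/
def certZ {n : ℕ} (Γ : Set (NOrder n)) : Set OmegaZ :=
  {D : OmegaZ | convexSubords D.1 n = Γ}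

/-- `convex(C_n)`: the labeled causets on ℤ some convex subset of which represents
the finite order with representative `p`. -/
def convexEvt {n : ℕ} (p : FinSPO n) : Set OmegaZ :=
  {D : OmegaZ | RepConvex D.1 p}

lemma isoFin_equiv (n : ℕ) : Equivalence (@IsoFin n) := by
  constructor
  · intro p; exact ⟨Equiv.refl _, fun a b => Iff.rfl⟩
  · rintro p q ⟨g, hg⟩
    exact ⟨g.symm, fun a b => ((hg (g.symm a) (g.symm b)).trans (by simp)).symm⟩
  · rintro p q s ⟨g, hg⟩ ⟨h, hh⟩
    exact ⟨g.trans h, fun a b => (hg a b).trans (hh _ _)⟩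

lemma repConvex_iso {α : Type*} (r : α → α → Prop) {n : ℕ} {p q : FinSPO n}
    (h : IsoFin p q) (hq : RepConvex r q) : RepConvex r p := by
  obtain ⟨g, hg⟩ := h
  obtain ⟨f, hf, hc, hr⟩ := hq
  refine ⟨f ∘ g, hf.comp g.injective, ?_, fun a b => (hg a b).trans (hr _ _)⟩
  have hrange : Set.range (f ∘ g) = Set.range f := by
    rw [Set.range_comp, Equiv.range_eq_univ, Set.image_univ]
  rwa [hrange]

lemma iso_of_toNOrder_eq {n : ℕ} {p q : FinSPO n} (h : toNOrder p = toNOrder q) :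
    IsoFin p q :=
  ((isoFin_equiv n).eqvGen_iff).mp (Quot.eq.mp h)

lemma mem_convexSubords {α : Type*} (r : α → α → Prop) {n : ℕ} (p : FinSPO n) :
    toNOrder p ∈ convexSubords r n ↔ RepConvex r p := by
  constructor
  · rintro ⟨q, hq, hrq⟩
    exact repConvex_iso r (iso_of_toNOrder_eq hq) hrq
  · intro h; exact ⟨p, rfl, h⟩

instance finSPO_finite (n : ℕ) : Finite (FinSPO n) := by
  unfold FinSPO; infer_instance

instance nOrder_finite (n : ℕ) : Finite (NOrder n) :=
  Finite.of_surjective (toNOrder (n := n)) (fun o => Quot.exists_rep o)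

/-- on `Ω̃_ℤ`, the σ-algebra `Σ` generated by the sets `cert_ℤ(Γ_n)`
(over all `n ≥ 1` and all sets `Γ_n` of `n`-orders with `cert_ℤ(Γ_n)` nonempty)
equals the σ-algebra `R` generated by the sets `convex(C_n)` over all finite orders
`C_n`. -/
theorem stmt_18 :
    MeasurableSpace.generateFrom
        {S : Set OmegaZ | ∃ n : ℕ, 1 ≤ n ∧
          ∃ Γ : Set (NOrder n), (certZ Γ).Nonempty ∧ S = certZ Γ} =
      MeasurableSpace.generateFrom
        {S : Set OmegaZ | ∃ n : ℕ, 1 ≤ n ∧ ∃ p : FinSPO n, S = convexEvt p} := by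
  refine le_antisymm (MeasurableSpace.generateFrom_le ?_)
    (MeasurableSpace.generateFrom_le ?_)
  · rintro S ⟨n, hn, Γ, -, rfl⟩
    have hA : ∀ o : NOrder n,
        @MeasurableSet OmegaZ (MeasurableSpace.generateFrom
          {S : Set OmegaZ | ∃ n : ℕ, 1 ≤ n ∧ ∃ p : FinSPO n, S = convexEvt p})
          {D : OmegaZ | o ∈ convexSubords D.1 n} := by
      intro o
      obtain ⟨p, rfl⟩ := Quot.exists_rep o
      have he : {D : OmegaZ | Quot.mk IsoFin p ∈ convexSubords D.1 n} = convexEvt p := by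
        ext D; exact mem_convexSubords D.1 p
      have hm := MeasurableSpace.measurableSet_generateFrom
        (s := {S : Set OmegaZ | ∃ n : ℕ, 1 ≤ n ∧ ∃ p : FinSPO n, S = convexEvt p}) ⟨n, hn, p, rfl⟩
      rw [← he] at hm
      exact hm
    have hce : certZ Γ =
        ⋂ o : NOrder n, {D : OmegaZ | o ∈ convexSubords D.1 n ↔ o ∈ Γ} := by
      ext D
      simp only [certZ, Set.mem_setOf_eq, Set.mem_iInter, Set.ext_iff]
    rw [hce]
    refine MeasurableSet.iInter fun o => ?_
    by_cases ho : o ∈ Γ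
    · have : {D : OmegaZ | o ∈ convexSubords D.1 n ↔ o ∈ Γ} =
          {D : OmegaZ | o ∈ convexSubords D.1 n} := by
        ext D; simp [ho]
      rw [this]; exact hA o
    · have : {D : OmegaZ | o ∈ convexSubords D.1 n ↔ o ∈ Γ} =
          {D : OmegaZ | o ∈ convexSubords D.1 n}ᶜ := by
        ext D; simp [ho]
      rw [this]; exact (hA o).compl
  · rintro S ⟨n, hn, p, rfl⟩
    have he : convexEvt p =
        ⋃ Γ ∈ {Γ : Set (NOrder n) | toNOrder p ∈ Γ ∧ (certZ Γ).Nonempty}, certZ Γ := by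
      ext D
      simp only [convexEvt, Set.mem_setOf_eq, Set.mem_iUnion]
      constructor
      · intro h
        exact ⟨convexSubords D.1 n,
          ⟨(mem_convexSubords D.1 p).mpr h, ⟨D, rfl⟩⟩, rfl⟩
      · rintro ⟨Γ, ⟨hp, -⟩, hD⟩
        have : convexSubords D.1 n = Γ := hD
        rw [← this] at hp
        exact (mem_convexSubords D.1 p).mp hp
    rw [he]
    refine MeasurableSet.biUnion (Set.to_countable _) ?_
    rintro Γ ⟨hp, hne⟩
    exact MeasurableSpace.measurableSet_generateFrom ⟨n, hn, Γ, hne, rfl⟩
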